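/- For integers m ≥ 2, the density of m-tuples of coprime positive integers equals 1/ζ(m): the number of m-tuples (x₁,…,x_m) with 1 ≤ x_j ≤ n and gcd(x₁,…,x_m) = 1, divided by n^m, tends to 1/ζ(m) as n → ∞. -/

import Mathlib

open Filter Finset ArithmeticFunction
open scoped ArithmeticFunction.Moebius LSeries.notation Topology

/-!
Since the tuples in `[1, n]^m` whose gcd is divisible by `d` are the multiples of `d`, there are
`⌊n/d⌋^m` of them, and Möbius inversion gives `V_m(n) = ∑_{d ≤ n} μ(d) ⌊n/d⌋^m`. After dividing
by `n^m` the `d`-th term tends to `μ(d)/d^m` and is bounded by `d^{-m}`, which is summable for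
`m ≥ 2`; by dominated convergence the limit is `∑ μ(d)/d^m = 1/ζ(m)`.
-/

section MoebiusCount

variable {R : Type*} [Ring R]

lemma ArithmeticFunction.sum_divisors_moebius (k : ℕ) :
    ∑ d ∈ k.divisors, (μ d : R) = if k = 1 then 1 else 0 := by
  simpa only [coe_mul_zeta_apply, intCoe_apply, one_apply] using
    congrArg (fun f : ArithmeticFunction R => f k) coe_moebius_mul_coe_zeta

theorem card_filter_eq_one_eq_sum_moebius {α : Type*} (s : Finset α) (g : α → ℕ) {N : ℕ}
    (hg : ∀ x ∈ s, g x ∈ Icc 1 N) :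
    (#{x ∈ s | g x = 1} : R) = ∑ d ∈ Icc 1 N, (μ d : R) * #{x ∈ s | d ∣ g x} := by
  have hdivisors : ∀ x ∈ s, (g x).divisors = {d ∈ Icc 1 N | d ∣ g x} := by
    intro x hx
    obtain ⟨hpos, hle⟩ := mem_Icc.mp (hg x hx)
    ext d
    simp only [Nat.mem_divisors, mem_filter, mem_Icc]
    constructor
    · rintro ⟨hd, -⟩
      exact ⟨⟨Nat.pos_of_dvd_of_pos hd hpos, (Nat.le_of_dvd hpos hd).trans hle⟩, hd⟩
    · rintro ⟨-, hd⟩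
      exact ⟨hd, by omega⟩
  calc (#{x ∈ s | g x = 1} : R) = ∑ x ∈ s, ∑ d ∈ (g x).divisors, (μ d : R) := by
        simp only [sum_divisors_moebius, card_filter, Nat.cast_sum, Nat.cast_ite, Nat.cast_one,
          Nat.cast_zero]
    _ = ∑ x ∈ s, ∑ d ∈ Icc 1 N, if d ∣ g x then (μ d : R) else 0 :=
        sum_congr rfl fun x hx => by rw [hdivisors x hx, sum_filter]
    _ = ∑ d ∈ Icc 1 N, (μ d : R) * #{x ∈ s | d ∣ g x} := by
        rw [sum_comm]
        refine sum_congr rfl fun d _ => ?_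
        rw [← sum_filter, sum_const, nsmul_eq_mul, (Nat.cast_commute _ _).eq]

section Tuples

variable {ι : Type*} [Fintype ι] [DecidableEq ι]

lemma gcd_mem_Icc_of_mem_piFinset [Nonempty ι] {n : ℕ} {f : ι → ℕ}
    (hf : f ∈ Fintype.piFinset fun _ => Icc 1 n) : univ.gcd f ∈ Icc 1 n := by
  obtain ⟨i⟩ := ‹Nonempty ι›
  obtain ⟨hpos, hle⟩ := mem_Icc.mp (Fintype.mem_piFinset.mp hf i)
  have hdvd : univ.gcd f ∣ f i := gcd_dvd (mem_univ i)
  exact mem_Icc.mpr ⟨Nat.pos_of_dvd_of_pos hdvd hpos, (Nat.le_of_dvd hpos hdvd).trans hle⟩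

lemma card_filter_dvd_gcd_piFinset (n d : ℕ) :
    #{f ∈ Fintype.piFinset (fun _ : ι => Icc 1 n) | d ∣ univ.gcd f}
      = (n / d) ^ Fintype.card ι := by
  have hfilter : {f ∈ Fintype.piFinset (fun _ : ι => Icc 1 n) | d ∣ univ.gcd f}
      = Fintype.piFinset fun _ => {x ∈ Ioc 0 n | d ∣ x} := by
    ext f
    simp [Finset.dvd_gcd_iff, forall_and, Nat.one_le_iff_ne_zero, Nat.pos_iff_ne_zero]
  rw [hfilter, Fintype.card_piFinset, prod_const, card_univ, Nat.Ioc_filter_dvd_card_eq_div]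

theorem card_coprime_tuples_eq_sum_moebius [Nonempty ι] (n : ℕ) :
    (#{f ∈ Fintype.piFinset (fun _ : ι => Icc 1 n) | univ.gcd f = 1} : R)
      = ∑ d ∈ Icc 1 n, (μ d : R) * ((n / d : ℕ) : R) ^ Fintype.card ι := by
  rw [card_filter_eq_one_eq_sum_moebius _ _ fun f hf => gcd_mem_Icc_of_mem_piFinset hf]
  simp only [card_filter_dvd_gcd_piFinset, Nat.cast_pow]

end Tuples

end MoebiusCount

lemma natCast_div_div_self_le_inv (n d : ℕ) : ((n / d : ℕ) : ℝ) / n ≤ (d : ℝ)⁻¹ := by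
  rcases n.eq_zero_or_pos with rfl | hn
  · simp
  calc ((n / d : ℕ) : ℝ) / n ≤ (n / d : ℝ) / n := by gcongr; exact Nat.cast_div_le
    _ = (d : ℝ)⁻¹ := by field_simp

lemma tendsto_natCast_div_div_self (d : ℕ) :
    Tendsto (fun n : ℕ => ((n / d : ℕ) : ℝ) / n) atTop (𝓝 (d : ℝ)⁻¹) := by
  rcases d.eq_zero_or_pos with rfl | hd
  · simp
  have hd' : (0 : ℝ) < d := by exact_mod_cast hd
  have hfloor := (tendsto_nat_floor_div_atTop.comp
    (tendsto_natCast_atTop_atTop.atTop_div_const hd')).mul_const (d : ℝ)⁻¹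
  rw [one_mul] at hfloor
  refine hfloor.congr fun n => ?_
  rw [Function.comp_apply, Nat.floor_div_eq_div]
  field_simp

theorem tendsto_sum_mul_div_pow_div_pow {f : ℕ → ℂ} {C : ℝ} (hf : ∀ d, ‖f d‖ ≤ C) {m : ℕ}
    (hm : 2 ≤ m) :
    Tendsto (fun n : ℕ => (∑ d ∈ Icc 1 n, f d * ((n / d : ℕ) : ℂ) ^ m) / (n : ℂ) ^ m) atTop
      (𝓝 (LSeries f m)) := by
  set F : ℕ → ℕ → ℂ := fun n d => f d * (((n / d : ℕ) : ℂ) / n) ^ m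
  have hm0 : m ≠ 0 := by omega
  have hsum : ∀ n : ℕ, (∑ d ∈ Icc 1 n, f d * ((n / d : ℕ) : ℂ) ^ m) / (n : ℂ) ^ m
      = ∑' d, F n d := by
    intro n
    rw [tsum_eq_sum (s := Icc 1 n), sum_div]
    · simp only [F, div_pow, mul_div_assoc]
    · intro d hd
      have hquot : n / d = 0 := by
        rcases Nat.eq_zero_or_pos d with rfl | hd0
        · exact Nat.div_zero n
        · exact Nat.div_eq_of_lt (by simp only [mem_Icc, not_and, not_le] at hd; omega)
      simp [F, hquot, hm0]
  have hbound : ∀ n d, ‖F n d‖ ≤ C * ((d : ℝ) ^ m)⁻¹ := by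
    intro n d
    simp only [F, norm_mul, norm_pow, norm_div, Complex.norm_natCast, ← inv_pow]
    gcongr
    · exact (norm_nonneg _).trans (hf 0)
    · exact hf d
    · exact natCast_div_div_self_le_inv n d
  have hlim : ∀ d, Tendsto (F · d) atTop (𝓝 (LSeries.term f m d)) := by
    intro d
    rcases eq_or_ne d 0 with rfl | hd
    · simp [F, hm0]
    have hratio := tendsto_ofReal_iff.mpr (tendsto_natCast_div_div_self d)
    push_cast at hratio
    rw [LSeries.term_of_ne_zero hd, Complex.cpow_natCast, div_eq_mul_inv, ← inv_pow]
    exact tendsto_const_nhds.mul (hratio.pow m)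
  rw [funext hsum]
  exact tendsto_tsum_of_dominated_convergence
    ((Real.summable_nat_pow_inv.mpr hm).mul_left C) hlim (Eventually.of_forall hbound)

/-- Lehmer (1900): for `m ≥ 2`, the density of coprime `m`-tuples of positive
integers is `1 / ζ(m)`. -/
theorem lehmer_coprime_tuples_density (m : ℕ) (hm : 2 ≤ m) :
    Tendsto (fun n : ℕ =>
        (((Fintype.piFinset fun _ : Fin m => Finset.Icc 1 n).filter
            fun f : Fin m → ℕ => Finset.univ.gcd f = 1).card : ℂ) / (n : ℂ) ^ m)
      atTop (nhds (riemannZeta m)⁻¹) := by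
  have hre : 1 < (m : ℂ).re := by simp only [Complex.natCast_re]; exact_mod_cast hm
  have hζ : LSeries ↗μ m = (riemannZeta m)⁻¹ := by
    rw [← LSeries_one_eq_riemannZeta hre]
    exact (inv_eq_of_mul_eq_one_right (LSeries_one_mul_Lseries_moebius hre)).symm
  have : Nonempty (Fin m) := ⟨⟨0, by omega⟩⟩
  rw [← hζ]
  refine (tendsto_sum_mul_div_pow_div_pow (C := 1) (fun d => ?_) hm).congr fun n => ?_
  · rw [Complex.norm_intCast]
    exact_mod_cast abs_moebius_le_one
  · rw [card_coprime_tuples_eq_sum_moebius, Fintype.card_fin]
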